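/- arXiv:2101.07000 — 3 statements merged into one kernel-verified Lean document; each statement's English description precedes it below -/
import Mathlib

section
/- Let (G,σ) be a 2-BMG, (T,σ) its least resolved tree with root ρ, and S_ρ the support leaves of ρ. If W := U(G,σ) \ S_ρ is nonempty, then W is a proper subset of S_v, where v is the unique inner-vertex child of ρ and S_v is its set of support leaves. -/
/-- A (finite) rooted tree on vertex type `V`, encoded by its ancestor relation:
`anc u v` means that `u` is an ancestor of `v`, i.e. `u` lies on the path from
the root to `v` (in particular the relation is reflexive, `v ⪯_T u ↔ anc u v`). -/
structure RTree (V : Type) where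
  anc : V → V → Prop
  refl : ∀ v, anc v v
  antisymm : ∀ u v, anc u v → anc v u → u = v
  trans : ∀ u v w, anc u v → anc v w → anc u w
  root : V
  root_anc : ∀ v, anc root v
  chain : ∀ u v w, anc u w → anc v w → anc u v ∨ anc v u

namespace RTree

variable {V C : Type}

/-- a leaf: a vertex without proper descendants. -/
def IsLeaf (T : RTree V) (v : V) : Prop := ∀ w, T.anc v w → w = v

/-- `v` is a child of `u`: `v ≺_T u` with no vertex strictly in between. -/
def IsChild (T : RTree V) (v u : V) : Prop :=
  T.anc u v ∧ u ≠ v ∧ ∀ w, T.anc u w → T.anc w v → w = u ∨ w = v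

/-- phylogenetic: every inner vertex has at least two children. -/
def Phylo (T : RTree V) : Prop :=
  ∀ u, ¬ T.IsLeaf u → ∃ v w, v ≠ w ∧ T.IsChild v u ∧ T.IsChild w u

/-- the leaf set `L(T)`. -/
def leaves (T : RTree V) : Set V := {x | T.IsLeaf x}

/-- `y` is a best match of `x` in the leaf-colored tree `(T,σ)`:
both are leaves, `σ x ≠ σ y`, and for every leaf `y'` of the color `σ y` we have
`lca(x,y) ⪯_T lca(x,y')`, i.e. every common ancestor of `x` and `y'` is an
ancestor of `y`.  These are exactly the arcs of the best match graph `G(T,σ)`,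
whose vertex set is the leaf set of `T`. -/
def BestMatch (T : RTree V) (σ : V → C) (x y : V) : Prop :=
  T.IsLeaf x ∧ T.IsLeaf y ∧ σ x ≠ σ y ∧
    ∀ y', T.IsLeaf y' → σ y' = σ y →
      ∀ u, T.anc u x → T.anc u y' → T.anc u y

/-- the subtree `T(v)` of `T` rooted at `v`. -/
def subtree (T : RTree V) (v : V) : RTree {w : V // T.anc v w} where
  anc a b := T.anc a.1 b.1
  refl a := T.refl a.1
  antisymm a b h1 h2 := Subtype.ext (T.antisymm _ _ h1 h2)
  trans a b c h1 h2 := T.trans _ _ _ h1 h2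
  root := ⟨v, T.refl v⟩
  root_anc a := a.2
  chain a b c h1 h2 := T.chain _ _ _ h1 h2

/-- contraction of the tree edge between the non-root vertex `v` and its
parent: the vertex `v` is identified with its parent, i.e. deleted. -/
def contract (T : RTree V) (v : V) (hv : v ≠ T.root) : RTree {w : V // w ≠ v} where
  anc a b := T.anc a.1 b.1
  refl a := T.refl a.1
  antisymm a b h1 h2 := Subtype.ext (T.antisymm _ _ h1 h2)
  trans a b c h1 h2 := T.trans _ _ _ h1 h2
  root := ⟨T.root, Ne.symm hv⟩
  root_anc a := T.root_anc a.1
  chain a b c h1 h2 := T.chain _ _ _ h1 h2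

/-- The edge of `T` between `v` and its parent is redundant with respect to
`G(T,σ)`: contracting it yields a tree that still explains `G(T,σ)`, i.e. the
contracted tree has the same leaf set and induces the same best-match arcs.
(Edges of a rooted tree are identified with their lower endpoint `v`.) -/
def Redundant (T : RTree V) (σ : V → C) (v : V) : Prop :=
  ∃ hv : v ≠ T.root,
    ¬ T.IsLeaf v ∧
    (∀ w : {w : V // w ≠ v}, T.IsLeaf w.1 ↔ (T.contract v hv).IsLeaf w) ∧
    (∀ x y : {w : V // w ≠ v},
      (T.BestMatch σ x.1 y.1 ↔ (T.contract v hv).BestMatch (fun w => σ w.1) x y))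

/-- `(T,σ)` is the least resolved tree (of the BMG `G(T,σ)`): a phylogenetic
tree none of whose edges is redundant. -/
def LeastResolved (T : RTree V) (σ : V → C) : Prop :=
  T.Phylo ∧ ∀ v, ¬ T.Redundant σ v

/-- the support leaves `S_u = child_T(u) ∩ L(T)` of a vertex `u`. -/
def SupportLeaves (T : RTree V) (u : V) : Set V :=
  {v | T.IsChild v u ∧ T.IsLeaf v}

/-- the set of colors `σ(L(T(v)))` occurring on leaves of the subtree `T(v)`. -/
def subColors (T : RTree V) (σ : V → C) (v : V) : Set C :=
  σ '' {x | T.IsLeaf x ∧ T.anc v x}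

/-- the set of colors `σ(L(T))` of the leaves of `T`. -/
def leafColors (T : RTree V) (σ : V → C) : Set C := σ '' T.leaves

/-- the leaf coloring uses exactly two colors, i.e. `G(T,σ)` is a 2-BMG. -/
def TwoColored (T : RTree V) (σ : V → C) : Prop :=
  ∃ c₁ c₂ : C, c₁ ≠ c₂ ∧ T.leafColors σ = {c₁, c₂}

end RTree

/-- the digraph with arc relation `A`, restricted to the vertex set `S`, is
connected: between any two vertices of `S` there is a path inside `S` in the
underlying undirected graph. -/
def ConnectedOn {β : Type} (A : β → β → Prop) (S : Set β) : Prop :=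
  S.Nonempty ∧ ∀ x ∈ S, ∀ y ∈ S,
    Relation.ReflTransGen (fun a b => a ∈ S ∧ b ∈ S ∧ (A a b ∨ A b a)) x y

/-- `K` is a connected component of the digraph induced by the arc relation `A`
on the vertex set `S`: a maximal connected subset of `S`. -/
def IsComponent {β : Type} (A : β → β → Prop) (S : Set β) (K : Set β) : Prop :=
  K ⊆ S ∧ ConnectedOn A K ∧
    ∀ K', K ⊆ K' → K' ⊆ S → ConnectedOn A K' → K' = K

namespace RTree

/-- the best match graph `G(T,σ)` (on the leaf set of `T`) is connected. -/
def BMGConnected {V C : Type} (T : RTree V) (σ : V → C) : Prop :=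
  ConnectedOn (T.BestMatch σ) T.leaves

/-- the umbrella vertices `U(G,σ)` of the BMG `G(T,σ)`: leaves having an
out-arc to every differently colored leaf. -/
def Umbrella {V C : Type} (T : RTree V) (σ : V → C) : Set V :=
  {x | T.IsLeaf x ∧ ∀ y, T.IsLeaf y → σ y ≠ σ x → T.BestMatch σ x y}

/-- `S` is closed under in-neighbours in `G(T,σ)`: `x ∈ S → N⁻(x) ⊆ S`. -/
def InClosed {V C : Type} (T : RTree V) (σ : V → C) (S : Set V) : Prop :=
  ∀ x ∈ S, ∀ y, T.BestMatch σ y x → y ∈ S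

/-- `S` is a support set of `G(T,σ)`: a maximal subset of the umbrella
vertices that is closed under in-neighbours. -/
def IsSupportSet {V C : Type} (T : RTree V) (σ : V → C) (S : Set V) : Prop :=
  S ⊆ T.Umbrella σ ∧ T.InClosed σ S ∧
    ∀ S', S ⊆ S' → S' ⊆ T.Umbrella σ → T.InClosed σ S' → S' = S

end RTree

/-! In a least resolved tree every non-root inner vertex carries leaves of both colours, since
otherwise the edge above it would be redundant. Hence an umbrella leaf `x` below such a vertex `v`
has all leaves of the other colour below `v`. For a child `v` of the root this forces `v` to be the
only inner child of the root, every element of `W` to have the colour of `x` and to hang directly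
below `v`; and `v` must carry a support leaf of the other colour, for otherwise contracting the
edge above `v` would not change any best match. -/

namespace RTree

variable {V C : Type}

section Tree

variable (T : RTree V)

abbrev ancOrder : PartialOrder V where
  le := T.anc
  le_refl := T.refl
  le_trans := T.trans
  le_antisymm := T.antisymm

theorem exists_isLeaf_anc [Finite V] (v : V) : ∃ l, T.IsLeaf l ∧ T.anc v l := by
  let := T.ancOrder
  obtain ⟨l, hvl, hl⟩ := Finite.exists_le_maximal (p := T.anc v) (T.refl v)
  exact ⟨l, fun w hlw => hl.eq_of_ge (T.trans _ _ _ hvl hlw) hlw, hvl⟩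

theorem exists_isChild_anc [Finite V] {u x : V} (hux : T.anc u x) (hxu : x ≠ u) :
    ∃ c, T.IsChild c u ∧ T.anc c x := by
  let := T.ancOrder
  obtain ⟨c, hcx, hc⟩ := Finite.exists_le_minimal
    (p := fun w => T.anc u w ∧ w ≠ u ∧ T.anc w x) ⟨hux, hxu, T.refl x⟩
  refine ⟨c, ⟨hc.prop.1, hc.prop.2.1.symm, fun w huw hwc => ?_⟩, hcx⟩
  by_cases hwu : w = u
  · exact Or.inl hwu
  · exact Or.inr (hc.eq_of_le ⟨huw, hwu, T.trans _ _ _ hwc hcx⟩ hwc)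

theorem exists_isChild_root_anc [Finite V] {x : V} (hxr : x ≠ T.root)
    (hxS : x ∉ T.SupportLeaves T.root) :
    ∃ v, (T.IsChild v T.root ∧ ¬ T.IsLeaf v) ∧ T.anc v x := by
  obtain ⟨v, hv, hvx⟩ := T.exists_isChild_anc (T.root_anc x) hxr
  refine ⟨v, ⟨hv, fun hvl => hxS ?_⟩, hvx⟩
  exact hvl x hvx ▸ ⟨hv, hvl⟩

variable {T}

theorem IsChild.ne_root {u v : V} (hv : T.IsChild v u) : v ≠ T.root :=
  fun h => hv.2.1 (T.antisymm _ _ hv.1 (h ▸ T.root_anc u))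

theorem IsChild.eq_of_anc {u a b w : V} (ha : T.IsChild a u) (hb : T.IsChild b u)
    (haw : T.anc a w) (hbw : T.anc b w) : a = b := by
  rcases T.chain a b w haw hbw with h | h
  · exact ((hb.2.2 a ha.1 h).resolve_left ha.2.1.symm)
  · exact ((ha.2.2 b hb.1 h).resolve_left hb.2.1.symm).symm

theorem Phylo.exists_isLeaf_not_anc [Finite V] (hT : T.Phylo) {v : V}
    (hv : T.IsChild v T.root) : ∃ l, T.IsLeaf l ∧ ¬ T.anc v l := by
  obtain ⟨d₁, d₂, hd, hd₁, hd₂⟩ := hT T.root fun h => hv.2.1 (h v hv.1).symm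
  obtain ⟨w, hw, hwv⟩ : ∃ w, T.IsChild w T.root ∧ w ≠ v := by
    by_cases h : d₁ = v
    · exact ⟨d₂, hd₂, h ▸ hd.symm⟩
    · exact ⟨d₁, hd₁, h⟩
  obtain ⟨l, hl, hwl⟩ := T.exists_isLeaf_anc w
  exact ⟨l, hl, fun hvl => hwv (hw.eq_of_anc hv hwl hvl)⟩

end Tree

section Redundant

variable (T : RTree V) (σ : V → C)

theorem isLeaf_contract_iff {v : V} (hv : v ≠ T.root) (hvl : ¬ T.IsLeaf v)
    (w : {w : V // w ≠ v}) : (T.contract v hv).IsLeaf w ↔ T.IsLeaf w.1 := by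
  refine ⟨fun h d hwd => ?_, fun h d hwd => Subtype.ext (h d.1 hwd)⟩
  by_cases hdv : d = v
  · subst hdv
    obtain ⟨e, hde, hed⟩ : ∃ e, T.anc d e ∧ e ≠ d := by simpa [IsLeaf] using hvl
    have hew : e = w.1 := congrArg Subtype.val (h ⟨e, hed⟩ (T.trans _ _ _ hwd hde))
    exact absurd (T.antisymm _ _ hwd (hew ▸ hde)) w.2
  · exact congrArg Subtype.val (h ⟨d, hdv⟩ hwd)

/-- Contracting `v` only removes the best-match constraint imposed by the ancestor `v`. -/
theorem redundant_of_forall {v : V} (hv : v ≠ T.root) (hvl : ¬ T.IsLeaf v)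
    (h : ∀ x y y', T.IsLeaf x → T.IsLeaf y → T.IsLeaf y' → σ x ≠ σ y → σ y' = σ y →
      T.anc v x → T.anc v y' →
      (∀ u ≠ v, ∀ y'', T.IsLeaf y'' → σ y'' = σ y → T.anc u x → T.anc u y'' → T.anc u y) →
      T.anc v y) :
    T.Redundant σ v := by
  have hleaf := T.isLeaf_contract_iff hv hvl
  have hne {y : V} (hy : T.IsLeaf y) : y ≠ v := fun h => hvl (h ▸ hy)
  refine ⟨hv, hvl, fun w => (hleaf w).symm, fun x y => ?_⟩
  simp only [BestMatch, hleaf]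
  refine ⟨fun ⟨hx, hy, hxy, hm⟩ => ⟨hx, hy, hxy, fun y' hy' hc u => hm y'.1 hy' hc u.1⟩,
    fun ⟨hx, hy, hxy, hm⟩ => ⟨hx, hy, hxy, fun y' hy' hc u hux huy' => ?_⟩⟩
  have hm' : ∀ u ≠ v, ∀ y'', T.IsLeaf y'' → σ y'' = σ y.1 → T.anc u x.1 → T.anc u y'' →
      T.anc u y.1 := fun u hu y'' hy'' hc'' =>
    hm ⟨y'', hne hy''⟩ hy'' hc'' ⟨u, hu⟩
  by_cases huv : u = v
  · subst huv
    exact h x.1 y.1 y' hx hy hy' hxy hc hux huy' hm'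
  · exact hm' u huv y' hy' hc hux huy'

theorem redundant_of_forall_isChild [Finite V] {v : V} (hv : v ≠ T.root)
    (hvl : ¬ T.IsLeaf v) (c : C) (hbelow : ∀ y, T.IsLeaf y → σ y ≠ c → T.anc v y)
    (hchild : ∀ z x, T.IsChild z v → T.IsLeaf x → T.anc z x → σ x ≠ c →
      ∃ y, T.IsLeaf y ∧ T.anc z y ∧ σ y = c) :
    T.Redundant σ v := by
  refine T.redundant_of_forall σ hv hvl fun x y _ hx hy _ hxy _ hvx _ hm => ?_
  by_cases hyc : σ y = c
  · obtain ⟨z, hz, hzx⟩ := T.exists_isChild_anc hvx fun h => hvl (h ▸ hx)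
    obtain ⟨y₀, hy₀, hzy₀, hy₀c⟩ := hchild z x hz hx hzx (hyc ▸ hxy)
    exact T.trans _ _ _ hz.1 (hm z hz.2.1.symm y₀ hy₀ (hy₀c.trans hyc.symm) hzx hzy₀)
  · exact hbelow y hy hyc

end Redundant

section LeastResolved

variable {T : RTree V} {σ : V → C}

theorem TwoColored.eq_of_ne_of_ne (h2 : T.TwoColored σ) {a b z : V} (ha : T.IsLeaf a)
    (hb : T.IsLeaf b) (hz : T.IsLeaf z) (haz : σ a ≠ σ z) (hbz : σ b ≠ σ z) : σ a = σ b := by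
  obtain ⟨c₁, c₂, -, hc⟩ := h2
  have hmem (l : V) (hl : T.IsLeaf l) : σ l = c₁ ∨ σ l = c₂ := by
    have : σ l ∈ T.leafColors σ := ⟨l, hl, rfl⟩
    simpa [hc] using this
  grind

theorem TwoColored.not_isLeaf_root (h2 : T.TwoColored σ) : ¬ T.IsLeaf T.root := by
  obtain ⟨c₁, c₂, hne, hc⟩ := h2
  obtain ⟨l₁, -, rfl⟩ : c₁ ∈ T.leafColors σ := by simp [hc]
  obtain ⟨l₂, -, rfl⟩ : c₂ ∈ T.leafColors σ := by simp [hc]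
  exact fun hr => hne (by rw [hr l₁ (T.root_anc l₁), hr l₂ (T.root_anc l₂)])

theorem LeastResolved.exists_isLeaf_anc_ne (hT : T.LeastResolved σ) {v : V}
    (hv : v ≠ T.root) (hvl : ¬ T.IsLeaf v) (c : C) :
    ∃ y, T.IsLeaf y ∧ T.anc v y ∧ σ y ≠ c := by
  by_contra! hmono
  refine hT.2 v (T.redundant_of_forall σ hv hvl fun x y y' hx _ hy' hxy hy'y hvx hvy' _ => ?_)
  exact absurd ((hmono x hx hvx).trans ((hmono y' hy' hvy').symm.trans hy'y)) hxy

theorem LeastResolved.anc_of_mem_umbrella (hT : T.LeastResolved σ) (h2 : T.TwoColored σ)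
    {x v : V} (hx : x ∈ T.Umbrella σ) (hv : v ≠ T.root) (hvl : ¬ T.IsLeaf v)
    (hvx : T.anc v x) {y : V} (hy : T.IsLeaf y) (hyx : σ y ≠ σ x) : T.anc v y := by
  obtain ⟨y₀, hy₀, hvy₀, hy₀x⟩ := hT.exists_isLeaf_anc_ne hv hvl (σ x)
  exact (hx.2 y hy hyx).2.2.2 y₀ hy₀ (h2.eq_of_ne_of_ne hy₀ hy hx.1 hy₀x hyx) v hvx hvy₀

theorem LeastResolved.eq_of_isChild_of_mem_umbrella (hT : T.LeastResolved σ)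
    (h2 : T.TwoColored σ) {x u v v' : V} (hx : x ∈ T.Umbrella σ) (hv : T.IsChild v u)
    (hvl : ¬ T.IsLeaf v) (hvx : T.anc v x) (hv' : T.IsChild v' u) (hv'l : ¬ T.IsLeaf v') :
    v' = v := by
  obtain ⟨y, hy, hv'y, hyx⟩ := hT.exists_isLeaf_anc_ne hv'.ne_root hv'l (σ x)
  exact hv'.eq_of_anc hv hv'y (hT.anc_of_mem_umbrella h2 hx hv.ne_root hvl hvx hy hyx)

theorem LeastResolved.color_eq_of_mem_umbrella [Finite V] (hT : T.LeastResolved σ)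
    (h2 : T.TwoColored σ) {x x' v : V} (hx : x ∈ T.Umbrella σ) (hx' : x' ∈ T.Umbrella σ)
    (hv : T.IsChild v T.root) (hvl : ¬ T.IsLeaf v) (hvx : T.anc v x) (hvx' : T.anc v x') :
    σ x' = σ x := by
  by_contra hne
  obtain ⟨l, hl, hvl'⟩ := hT.1.exists_isLeaf_not_anc hv
  by_cases hlx : σ l = σ x
  · exact hvl' (hT.anc_of_mem_umbrella h2 hx' hv.ne_root hvl hvx' hl (hlx ▸ Ne.symm hne))
  · exact hvl' (hT.anc_of_mem_umbrella h2 hx hv.ne_root hvl hvx hl hlx)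

/-- If `x` lay below an inner child `z` of `v`, all leaves of the other colour would lie
below `z`, making the edge above `v` redundant. -/
theorem LeastResolved.isChild_of_mem_umbrella [Finite V] (hT : T.LeastResolved σ)
    (h2 : T.TwoColored σ) {x v : V} (hx : x ∈ T.Umbrella σ) (hv : v ≠ T.root)
    (hvl : ¬ T.IsLeaf v) (hvx : T.anc v x) : T.IsChild x v := by
  obtain ⟨z, hz, hzx⟩ := T.exists_isChild_anc hvx fun h => hvl (h ▸ hx.1)
  by_cases hzx' : z = x
  · exact hzx' ▸ hz
  have hbelow {y : V} := hT.anc_of_mem_umbrella h2 hx hz.ne_root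
    (fun hzl => hzx' (hzl x hzx).symm) hzx (y := y)
  refine absurd (T.redundant_of_forall_isChild σ hv hvl (σ x)
    (fun y hy hyx => T.trans _ _ _ hz.1 (hbelow hy hyx)) fun z' y hz' hy hz'y hyx => ?_) (hT.2 v)
  obtain rfl := hz'.eq_of_anc hz hz'y (hbelow hy hyx)
  exact ⟨x, hx.1, hzx, rfl⟩

theorem LeastResolved.exists_mem_supportLeaves_ne [Finite V] (hT : T.LeastResolved σ)
    (h2 : T.TwoColored σ) {x v : V} (hx : x ∈ T.Umbrella σ) (hv : v ≠ T.root)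
    (hvl : ¬ T.IsLeaf v) (hvx : T.anc v x) : ∃ s ∈ T.SupportLeaves v, σ s ≠ σ x := by
  by_contra! hS
  refine hT.2 v (T.redundant_of_forall_isChild σ hv hvl (σ x)
    (fun y hy hyx => hT.anc_of_mem_umbrella h2 hx hv hvl hvx hy hyx)
    fun z y hz hy hzy hyx => ?_)
  have hzl : ¬ T.IsLeaf z := fun hzl => hyx (hzl y hzy ▸ hS z ⟨hz, hzl⟩)
  obtain ⟨y₀, hy₀, hzy₀, hy₀y⟩ := hT.exists_isLeaf_anc_ne hz.ne_root hzl (σ y)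
  exact ⟨y₀, hy₀, hzy₀, h2.eq_of_ne_of_ne hy₀ hx.1 hy hy₀y (Ne.symm hyx)⟩

end LeastResolved

end RTree

/-- Let `(G,σ)` be a 2-BMG, `(T,σ)` its LRT with root `ρ`,
and `S_ρ` the support leaves of `ρ`.  If `W = U(G,σ) \ S_ρ ≠ ∅`, then `W` is a
proper subset of `S_v`, where `v` is the unique inner-vertex child of `ρ`. -/
theorem W_proper_subset_of_Sv {V C : Type} [Fintype V]
    (T : RTree V) (σ : V → C) (hLRT : T.LeastResolved σ)
    (h2 : T.TwoColored σ)
    (hW : (T.Umbrella σ \ T.SupportLeaves T.root).Nonempty) :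
    ∃ v, (T.IsChild v T.root ∧ ¬ T.IsLeaf v) ∧
      (∀ v', T.IsChild v' T.root → ¬ T.IsLeaf v' → v' = v) ∧
      (T.Umbrella σ \ T.SupportLeaves T.root) ⊂ T.SupportLeaves v := by
  have hne_root {x : V} (hx : T.IsLeaf x) : x ≠ T.root := fun h => h2.not_isLeaf_root (h ▸ hx)
  obtain ⟨x, hx, hxS⟩ := hW
  obtain ⟨v, ⟨hv, hvl⟩, hvx⟩ := T.exists_isChild_root_anc (hne_root hx.1) hxS
  have huniq (v' : V) (hv' : T.IsChild v' T.root) (hv'l : ¬ T.IsLeaf v') : v' = v :=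
    hLRT.eq_of_isChild_of_mem_umbrella h2 hx hv hvl hvx hv' hv'l
  have hWv : ∀ x' ∈ T.Umbrella σ \ T.SupportLeaves T.root, T.IsChild x' v ∧ σ x' = σ x := by
    rintro x' ⟨hx', hx'S⟩
    obtain ⟨v', ⟨hv', hv'l⟩, hv'x'⟩ := T.exists_isChild_root_anc (hne_root hx'.1) hx'S
    obtain rfl := huniq v' hv' hv'l
    exact ⟨hLRT.isChild_of_mem_umbrella h2 hx' hv.ne_root hvl hv'x',
      hLRT.color_eq_of_mem_umbrella h2 hx hx' hv hvl hvx hv'x'⟩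
  obtain ⟨s, hs, hsx⟩ := hLRT.exists_mem_supportLeaves_ne h2 hx hv.ne_root hvl hvx
  exact ⟨v, ⟨hv, hvl⟩, huniq, ssubset_of_subset_not_superset
    (fun x' hx' => ⟨(hWv x' hx').1, hx'.1.1⟩) fun h => hsx (hWv s (h hs)).2⟩
end

section
/- A 2-BMG (G,σ) contains an induced hourglass if and only if its least resolved tree (T,σ) contains an inner vertex u such that the set of support leaves S_u contains vertices of both colors and the graph G(T(u)) − S_u has a nonempty vertex set (i.e., u has a child that is not a support leaf). -/
/-- the BMG `G(T,σ)` contains an induced hourglass `[xy ↘↗ x'y']`. -/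
def HasHourglass {V C : Type} (T : RTree V) (σ : V → C) : Prop :=
  ∃ x x' y y' : V,
    x ≠ x' ∧ x ≠ y ∧ x ≠ y' ∧ x' ≠ y ∧ x' ≠ y' ∧ y ≠ y' ∧
    σ x = σ x' ∧ σ y = σ y' ∧ σ x ≠ σ y ∧
    T.BestMatch σ x y ∧ T.BestMatch σ y x ∧
    T.BestMatch σ x' y' ∧ T.BestMatch σ y' x' ∧
    T.BestMatch σ x y' ∧ T.BestMatch σ y x' ∧
    ¬ T.BestMatch σ y' x ∧ ¬ T.BestMatch σ x' y

section Aux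

variable {V C : Type}

open Finset in
/-- Every nonempty set of vertices has a minimal (deepest-possible) element. -/
lemma RTree.exists_minimal [Fintype V] (T : RTree V) (S : Set V) (hne : S.Nonempty) :
    ∃ u ∈ S, ∀ u' ∈ S, T.anc u u' → u' = u := by
  classical
  obtain ⟨v, hv⟩ := hne
  obtain ⟨u, hu, hmax⟩ := Finset.exists_max_image (Finset.univ.filter (· ∈ S))
      (fun u => (Finset.univ.filter (fun w => T.anc w u)).card) ⟨v, by simp [hv]⟩
  refine ⟨u, by simpa using hu, fun u' hu' hanc => ?_⟩
  by_contra hne'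
  have hsub : Finset.univ.filter (fun w => T.anc w u) ⊂ Finset.univ.filter (fun w => T.anc w u') := by
    rw [Finset.ssubset_iff_of_subset]
    · refine ⟨u', by simp [T.refl], ?_⟩
      simp only [Finset.mem_filter, Finset.mem_univ, true_and]
      intro h
      exact hne' (T.antisymm _ _ h hanc)
    · intro w hw
      simp only [Finset.mem_filter, Finset.mem_univ, true_and] at hw ⊢
      exact T.trans _ _ _ hw hanc
  have h1 := Finset.card_lt_card hsub
  have h2 := hmax u' (by simp [hu'])
  omega

/-- A nonempty chain of vertices has a maximum (topmost) element. -/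
lemma RTree.exists_max_of_chain [Fintype V] (T : RTree V) (S : Set V) (hne : S.Nonempty)
    (hchain : ∀ a ∈ S, ∀ b ∈ S, T.anc a b ∨ T.anc b a) :
    ∃ u ∈ S, ∀ u' ∈ S, T.anc u u' := by
  classical
  obtain ⟨v, hv⟩ := hne
  obtain ⟨u, hu, hmax⟩ := Finset.exists_max_image (Finset.univ.filter (· ∈ S))
      (fun u => (Finset.univ.filter (fun w => T.anc u w)).card) ⟨v, by simp [hv]⟩
  have huS : u ∈ S := by simpa using hu
  refine ⟨u, huS, fun u' hu' => ?_⟩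
  rcases hchain u huS u' hu' with h | h
  · exact h
  · by_contra hne'
    have hsub : Finset.univ.filter (fun w => T.anc u w) ⊂ Finset.univ.filter (fun w => T.anc u' w) := by
      rw [Finset.ssubset_iff_of_subset]
      · refine ⟨u', by simp [T.refl], ?_⟩
        simp only [Finset.mem_filter, Finset.mem_univ, true_and]
        exact hne'
      · intro w hw
        simp only [Finset.mem_filter, Finset.mem_univ, true_and] at hw ⊢
        exact T.trans _ _ _ h hw
    have h1 := Finset.card_lt_card hsub
    have h2 := hmax u' (by simp [hu'])
    omega

/-- Every vertex has a leaf below it. -/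
lemma RTree.exists_leaf_below [Fintype V] (T : RTree V) (v : V) :
    ∃ ℓ, T.IsLeaf ℓ ∧ T.anc v ℓ := by
  obtain ⟨u, hu, hmin⟩ := T.exists_minimal {w | T.anc v w} ⟨v, T.refl v⟩
  exact ⟨u, fun w hw => hmin w (T.trans _ _ _ hu hw) hw, hu⟩

/-- If `c` is a proper descendant of `u`, there is a child of `u` above `c`. -/
lemma RTree.exists_child [Fintype V] (T : RTree V) {u c : V} (h : T.anc u c) (hne : c ≠ u) :
    ∃ v, T.IsChild v u ∧ T.anc v c := by
  obtain ⟨v, hv, hmax⟩ := T.exists_max_of_chain {w | T.anc u w ∧ T.anc w c ∧ w ≠ u}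
    ⟨c, h, T.refl c, hne⟩ (fun a ha b hb => T.chain a b c ha.2.1 hb.2.1)
  refine ⟨v, ⟨hv.1, Ne.symm hv.2.2, fun w hw1 hw2 => ?_⟩, hv.2.1⟩
  by_cases hwu : w = u
  · exact Or.inl hwu
  · exact Or.inr (T.antisymm _ _ hw2 (hmax w ⟨hw1, T.trans _ _ _ hw2 hv.2.1, hwu⟩))

end Aux
section LemA

variable {V C : Type}

/-- In the LRT of a 2-colored BMG, the subtree of every inner vertex contains
leaves of both colors. -/
lemma RTree.bichrom_of_inner [Fintype V] (T : RTree V) (σ : V → C)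
    (hLRT : T.LeastResolved σ) (h2 : T.TwoColored σ) {v : V} (hv : ¬ T.IsLeaf v) :
    ∃ p q, T.IsLeaf p ∧ T.anc v p ∧ T.IsLeaf q ∧ T.anc v q ∧ σ p ≠ σ q := by
  by_contra hcon
  push_neg at hcon
  -- all leaves below v have the same color
  have mono : ∀ p, T.IsLeaf p → T.anc v p → ∀ q, T.IsLeaf q → T.anc v q → σ p = σ q := by
    intro p hp hvp q hq hvq
    by_contra hne
    exact hne (hcon p q hp hvp hq hvq)
  by_cases hroot : v = T.root
  · -- whole tree monochromatic, contradicting 2-coloring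
    obtain ⟨c₁, c₂, hc, hcols⟩ := h2
    have h1 : c₁ ∈ T.leafColors σ := by rw [hcols]; exact Set.mem_insert _ _
    have h2' : c₂ ∈ T.leafColors σ := by rw [hcols]; exact Set.mem_insert_of_mem _ rfl
    obtain ⟨p, hp, hpc⟩ := h1
    obtain ⟨q, hq, hqc⟩ := h2'
    subst hroot
    exact hc (hpc ▸ hqc ▸ mono p hp (T.root_anc p) q hq (T.root_anc q))
  · -- the edge above v is redundant
    refine hLRT.2 v ⟨hroot, hv, ?_⟩
    have LE : ∀ w : {w : V // w ≠ v}, T.IsLeaf w.1 ↔ (T.contract v hroot).IsLeaf w := by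
      intro w
      constructor
      · intro hw b hb
        exact Subtype.ext (hw b.1 hb)
      · intro hw w' hanc
        by_cases hw' : w' = v
        · exfalso
          rw [hw'] at hanc
          obtain ⟨ℓ, hℓ, hvℓ⟩ := T.exists_leaf_below v
          have hℓv : ℓ ≠ v := by
            intro h; subst h; exact hv hℓ
          have := hw ⟨ℓ, hℓv⟩ (T.trans _ _ _ hanc hvℓ)
          have hwℓ : ℓ = w.1 := congrArg Subtype.val this
          subst hwℓ
          exact w.2 (T.antisymm _ _ hanc hvℓ)
        · exact congrArg Subtype.val (hw ⟨w', hw'⟩ hanc)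
    refine ⟨LE, fun x y => ?_⟩
    constructor
    · rintro ⟨hx, hy, hσ, hbm⟩
      exact ⟨(LE x).1 hx, (LE y).1 hy, hσ,
        fun y' hy' hσ' u' h1 h2 => hbm y'.1 ((LE y').2 hy') hσ' u'.1 h1 h2⟩
    · rintro ⟨hx, hy, hσ, hbm⟩
      refine ⟨(LE x).2 hx, (LE y).2 hy, hσ, fun y' hy' hσ' u' h1u h2u => ?_⟩
      by_cases hy'v : y' = v
      · exact absurd (hy'v ▸ hy') hv
      by_cases hu'v : u' = v
      · exfalso
        subst hu'v
        have := mono x.1 ((LE x).2 hx) h1u y' hy' h2u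
        rw [hσ'] at this
        exact hσ this
      · exact hbm ⟨y', hy'v⟩ ((LE ⟨y', hy'v⟩).1 hy') hσ' ⟨u', hu'v⟩ h1u h2u

end LemA
section LemB

variable {V C : Type}

/-- A leaf child `x` of `u` has every differently-colored leaf below `u` as a
best match. -/
lemma RTree.child_leaf_bm (T : RTree V) (σ : V → C) {x u z : V}
    (hx : T.IsChild x u) (hxl : T.IsLeaf x) (hz : T.IsLeaf z) (hanc : T.anc u z)
    (hσ : σ x ≠ σ z) : T.BestMatch σ x z := by
  refine ⟨hxl, hz, hσ, fun y' hy' hσ' u' h1 h2 => ?_⟩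
  by_cases hu'x : u' = x
  · exfalso
    subst hu'x
    have := hxl y' h2
    rw [this] at hσ'
    exact hσ hσ'
  · have hcomp : T.anc u' u ∨ T.anc u u' := T.chain u' u x h1 hx.1
    rcases hcomp with h | h
    · exact T.trans _ _ _ h hanc
    · rcases hx.2.2 u' h h1 with h' | h'
      · rw [h']; exact hanc
      · exact absurd h' hu'x

/-- Below a minimal bichromatic vertex `w`, differently colored leaves are
best matches. -/
lemma RTree.min_bichrom_bm (T : RTree V) (σ : V → C) {w p q : V}
    (hmin : ∀ w', T.anc w w' →
      (∃ s t, T.IsLeaf s ∧ T.anc w' s ∧ T.IsLeaf t ∧ T.anc w' t ∧ σ s ≠ σ t) → w' = w)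
    (hp : T.IsLeaf p) (hpw : T.anc w p) (hq : T.IsLeaf q) (hqw : T.anc w q)
    (hσ : σ p ≠ σ q) : T.BestMatch σ p q := by
  refine ⟨hp, hq, hσ, fun y' hy' hσ' u' h1 h2 => ?_⟩
  rcases T.chain u' w p h1 hpw with h | h
  · exact T.trans _ _ _ h hqw
  · have : u' = w := hmin u' h ⟨p, y', hp, h1, hy', h2, by rw [hσ']; exact hσ⟩
    rw [this]; exact hqw

/-- pigeonhole for two colors. -/
lemma RTree.two_color_match (T : RTree V) (σ : V → C) (h2 : T.TwoColored σ)
    {a b p q : V} (ha : T.IsLeaf a) (hb : T.IsLeaf b) (hab : σ a ≠ σ b)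
    (hp : T.IsLeaf p) (hq : T.IsLeaf q) (hpq : σ p ≠ σ q) :
    (σ p = σ a ∧ σ q = σ b) ∨ (σ p = σ b ∧ σ q = σ a) := by
  obtain ⟨c₁, c₂, hc, hcols⟩ := h2
  have mem : ∀ x, T.IsLeaf x → σ x = c₁ ∨ σ x = c₂ := by
    intro x hx
    have : σ x ∈ T.leafColors σ := ⟨x, hx, rfl⟩
    rw [hcols] at this
    simpa using this
  rcases mem a ha with h1 | h1 <;> rcases mem b hb with h2 | h2 <;>
    rcases mem p hp with h3 | h3 <;> rcases mem q hq with h4 | h4 <;>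
    simp_all <;> tauto

end LemB
/-- A 2-BMG `(G,σ)` contains an induced hourglass iff its
LRT `(T,σ)` has an inner vertex `u` such that `S_u` contains support leaves of
both colors and `V(G(T(u)) − S_u) ≠ ∅`, i.e. some leaf of `T(u)` is not a
support leaf of `u`. -/
theorem hourglass_iff_support_structure {V C : Type} [Fintype V]
    (T : RTree V) (σ : V → C) (hLRT : T.LeastResolved σ)
    (h2 : T.TwoColored σ) :
    HasHourglass T σ ↔
      ∃ u, ¬ T.IsLeaf u ∧
        (∃ a ∈ T.SupportLeaves u, ∃ b ∈ T.SupportLeaves u, σ a ≠ σ b) ∧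
        (∃ c, T.IsLeaf c ∧ T.anc u c ∧ c ∉ T.SupportLeaves u) := by
  constructor
  · -- forward direction
    rintro ⟨x, x', y, y', hxx', hxy, hxy', hx'y, hx'y', hyy', hσxx', hσyy', hσxy,
      hbxy, hbyx, hbx'y', hby'x', hbxy', hbyx', hnby'x, hnbx'y⟩
    obtain ⟨u, hu, humin⟩ := T.exists_minimal {w | T.anc w x ∧ T.anc w y}
      ⟨T.root, T.root_anc x, T.root_anc y⟩
    obtain ⟨hux, huy⟩ := hu
    have hxl : T.IsLeaf x := hbxy.1
    have hyl : T.IsLeaf y := hbxy.2.1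
    have hy'l : T.IsLeaf y' := hbx'y'.2.1
    have hxu : x ≠ u := by
      intro h; rw [← h] at huy; exact hxy (hxl y huy).symm
    have hyu : y ≠ u := by
      intro h; rw [← h] at hux; exact hxy (hyl x hux)
    -- x is a child of u
    obtain ⟨vx, hvxchild, hvxx⟩ := T.exists_child hux hxu
    have hvxeq : vx = x := by
      by_contra hne
      have hvxinner : ¬ T.IsLeaf vx := fun hl => hne (hl x hvxx).symm
      obtain ⟨p, q, hpl, hpv, hql, hqv, hpq⟩ := T.bichrom_of_inner σ hLRT h2 hvxinner
      have hz : ∃ z, T.IsLeaf z ∧ T.anc vx z ∧ σ z = σ y := by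
        rcases T.two_color_match σ h2 hxl hyl hσxy hpl hql hpq with ⟨h1, h2'⟩ | ⟨h1, h2'⟩
        · exact ⟨q, hql, hqv, h2'⟩
        · exact ⟨p, hpl, hpv, h1⟩
      obtain ⟨z, hzl, hzv, hzy⟩ := hz
      have hvxy : T.anc vx y := hbxy.2.2.2 z hzl hzy vx hvxx hzv
      exact hvxchild.2.1 (humin vx ⟨hvxx, hvxy⟩ hvxchild.1).symm
    rw [hvxeq] at hvxchild
    -- y is a child of u
    obtain ⟨vy, hvychild, hvyy⟩ := T.exists_child huy hyu
    have hvyeq : vy = y := by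
      by_contra hne
      have hvyinner : ¬ T.IsLeaf vy := fun hl => hne (hl y hvyy).symm
      obtain ⟨p, q, hpl, hpv, hql, hqv, hpq⟩ := T.bichrom_of_inner σ hLRT h2 hvyinner
      have hz : ∃ z, T.IsLeaf z ∧ T.anc vy z ∧ σ z = σ x := by
        rcases T.two_color_match σ h2 hxl hyl hσxy hpl hql hpq with ⟨h1, h2'⟩ | ⟨h1, h2'⟩
        · exact ⟨p, hpl, hpv, h1⟩
        · exact ⟨q, hql, hqv, h2'⟩
      obtain ⟨z, hzl, hzv, hzx⟩ := hz
      have hvyx : T.anc vy x := hbyx.2.2.2 z hzl hzx vy hvyy hzv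
      exact hvychild.2.1 (humin vy ⟨hvyx, hvyy⟩ hvychild.1).symm
    rw [hvyeq] at hvychild
    -- u is above y'
    have huy' : T.anc u y' := hbxy'.2.2.2 y hyl hσyy' u hux huy
    have hσy'x : σ y' ≠ σ x := by
      rw [← hσyy']; exact fun h => hσxy h.symm
    -- from ¬(y' → x) extract a witness
    have hex : ∃ z', T.IsLeaf z' ∧ σ z' = σ x ∧
        ∃ u'', T.anc u'' y' ∧ T.anc u'' z' ∧ ¬ T.anc u'' x := by
      by_contra hcon
      push_neg at hcon
      exact hnby'x ⟨hy'l, hxl, hσy'x, hcon⟩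
    obtain ⟨z', hz'l, hz'σ, u', hu'y', hu'z', hu'x⟩ := hex
    have hu'u : u' ≠ u := by
      intro h; rw [h] at hu'x; exact hu'x hux
    have huu' : T.anc u u' := by
      rcases T.chain u' u y' hu'y' huy' with h | h
      · exact absurd (T.trans _ _ _ h hux) hu'x
      · exact h
    have hy'u : y' ≠ u := by
      intro h; rw [h] at hu'y'; exact hu'u (T.antisymm _ _ hu'y' huu')
    obtain ⟨v, hvchild, hvy'⟩ := T.exists_child huy' hy'u
    have hvu' : T.anc v u' := by
      rcases T.chain u' v y' hu'y' hvy' with h | h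
      · rcases hvchild.2.2 u' huu' h with h' | h'
        · exact absurd h' hu'u
        · rw [← h']; exact T.refl u'
      · exact h
    have hy'ns : y' ∉ T.SupportLeaves u := by
      rintro ⟨hych, -⟩
      rcases hych.2.2 v hvchild.1 hvy' with h | h
      · exact hvchild.2.1 h.symm
      · rw [h] at hvu'
        have h1 := hy'l u' hvu'
        rw [h1] at hu'z'
        have h2 := hy'l z' hu'z'
        rw [h2] at hz'σ
        exact hσy'x hz'σ
    have huinner : ¬ T.IsLeaf u := fun hl => hxy ((hl x hux).trans (hl y huy).symm)
    exact ⟨u, huinner, ⟨x, ⟨hvxchild, hxl⟩, y, ⟨hvychild, hyl⟩, hσxy⟩, y', hy'l, huy', hy'ns⟩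
  · -- backward direction
    rintro ⟨u, hu, ⟨a, ⟨hach, hal⟩, b, ⟨hbch, hbl⟩, hab⟩, c, hcl, huc, hcns⟩
    have hcu : c ≠ u := by
      intro h; rw [h] at hcl; exact hu hcl
    obtain ⟨v, hvch, hvc⟩ := T.exists_child huc hcu
    have hcv : c ≠ v := by
      intro h; rw [← h] at hvch; exact hcns ⟨hvch, hcl⟩
    have hvinner : ¬ T.IsLeaf v := fun hl => hcv (hl c hvc)
    obtain ⟨p0, q0, hp0, hp0v, hq0, hq0v, hpq0⟩ := T.bichrom_of_inner σ hLRT h2 hvinner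
    obtain ⟨w, hwS, hwmin⟩ := T.exists_minimal
      {w | T.anc v w ∧ ∃ s t, T.IsLeaf s ∧ T.anc w s ∧ T.IsLeaf t ∧ T.anc w t ∧ σ s ≠ σ t}
      ⟨v, T.refl v, p0, q0, hp0, hp0v, hq0, hq0v, hpq0⟩
    obtain ⟨hvw, p, q, hpl, hwp, hql, hwq, hpq⟩ := hwS
    have hmin : ∀ w', T.anc w w' →
        (∃ s t, T.IsLeaf s ∧ T.anc w' s ∧ T.IsLeaf t ∧ T.anc w' t ∧ σ s ≠ σ t) → w' = w :=
      fun w' hww' hbi => hwmin w' ⟨T.trans _ _ _ hvw hww', hbi⟩ hww'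
    obtain ⟨x', y', hx'l, hwx', hy'l, hwy', hx'σ, hy'σ⟩ :
        ∃ x' y', T.IsLeaf x' ∧ T.anc w x' ∧ T.IsLeaf y' ∧ T.anc w y' ∧
          σ x' = σ a ∧ σ y' = σ b := by
      rcases T.two_color_match σ h2 hal hbl hab hpl hql hpq with ⟨h1, h2'⟩ | ⟨h1, h2'⟩
      · exact ⟨p, q, hpl, hwp, hql, hwq, h1, h2'⟩
      · exact ⟨q, p, hql, hwq, hpl, hwp, h2', h1⟩
    have hauw : T.anc u w := T.trans _ _ _ hvch.1 hvw
    have hux' : T.anc u x' := T.trans _ _ _ hauw hwx'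
    have huy' : T.anc u y' := T.trans _ _ _ hauw hwy'
    have hnwa : ¬ T.anc w a := by
      intro h
      rcases hach.2.2 w hauw h with h' | h'
      · rw [h'] at hvw; exact hvch.2.1 (T.antisymm _ _ hvch.1 hvw)
      · rw [h'] at hwy'
        have h1 := hal y' hwy'
        rw [h1] at hy'σ
        exact hab hy'σ
    have hnwb : ¬ T.anc w b := by
      intro h
      rcases hbch.2.2 w hauw h with h' | h'
      · rw [h'] at hvw; exact hvch.2.1 (T.antisymm _ _ hvch.1 hvw)
      · rw [h'] at hwx'
        have h1 := hbl x' hwx'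
        rw [h1] at hx'σ
        exact hab hx'σ.symm
    refine ⟨a, x', b, y', ?_, ?_, ?_, ?_, ?_, ?_, hx'σ.symm, hy'σ.symm, hab,
      T.child_leaf_bm σ hach hal hbl hbch.1 hab,
      T.child_leaf_bm σ hbch hbl hal hach.1 hab.symm,
      T.min_bichrom_bm σ hmin hx'l hwx' hy'l hwy' (by rw [hx'σ, hy'σ]; exact hab),
      T.min_bichrom_bm σ hmin hy'l hwy' hx'l hwx' (by rw [hx'σ, hy'σ]; exact hab.symm),
      T.child_leaf_bm σ hach hal hy'l huy' (by rw [hy'σ]; exact hab),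
      T.child_leaf_bm σ hbch hbl hx'l hux' (by rw [hx'σ]; exact hab.symm),
      ?_, ?_⟩
    · intro h; rw [h] at hnwa; exact hnwa hwx'
    · exact fun h => hab (congrArg σ h)
    · intro h; apply hab; rw [h, hy'σ]
    · intro h; apply hab; rw [← hx'σ, h]
    · intro h; apply hab; rw [← hx'σ, h, hy'σ]
    · intro h; rw [h] at hnwb; exact hnwb hwy'
    · rintro ⟨-, -, -, hbm⟩
      exact hnwa (hbm x' hx'l hx'σ w hwy' hwx')
    · rintro ⟨-, -, -, hbm⟩
      exact hnwb (hbm y' hy'l hy'σ w hwx' hwy')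
end

section
/- There exists a leaf-colored tree for which the best match graph of every proper subtree is connected, yet the tree is not least resolved: namely, the caterpillar tree (T,σ) given by (x'',(x',(x,y))) with σ(x)=σ(x')=σ(x'')≠σ(y) satisfies that G(T(v),σ|.) is connected for every vertex v ≺_T ρ_T, but the inner edge ρ_T u with u = lca_T(x,x') is redundant with respect to G(T,σ). Hence the converse of the statement 'every subtree of an LRT explains a connected BMG' is false. -/
/-- the ancestor relation of the caterpillar tree `(x'',(x',(x,y)))`:
vertex `0` is the root `ρ`, `1 = x''`, `2 = u = lca(x,x')`, `3 = x'`,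
`4 = lca(x,y)`, `5 = x`, `6 = y`. -/
def catAnc : Fin 7 → Fin 7 → Prop := fun a b =>
  a = 0 ∨ a = b ∨ (a = 2 ∧ (b = 3 ∨ b = 4 ∨ b = 5 ∨ b = 6)) ∨
    (a = 4 ∧ (b = 5 ∨ b = 6))

instance : ∀ a b, Decidable (catAnc a b) := fun a b => by
  unfold catAnc; infer_instance

/-- the caterpillar tree `(x'',(x',(x,y)))`. -/
def caterpillar : RTree (Fin 7) where
  anc := catAnc
  refl := by decide
  antisymm := by decide
  trans := by decide
  root := 0
  root_anc := by decide
  chain := by decide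

/-- the leaf coloring with `σ(x) = σ(x') = σ(x'') = 0 ≠ 1 = σ(y)`. -/
def catColor : Fin 7 → Fin 2 := fun v => if v = 6 then 1 else 0

instance decAncCat : ∀ a b, Decidable (caterpillar.anc a b) := fun a b =>
  inferInstanceAs (Decidable (catAnc a b))

section Dec

variable {V C : Type} [Fintype V] [DecidableEq V] [DecidableEq C]
variable (T : RTree V) [inst : ∀ a b, Decidable (T.anc a b)]

instance instDecIsLeaf (v : V) : Decidable (T.IsLeaf v) :=
  inferInstanceAs (Decidable (∀ w, T.anc v w → w = v))

instance instDecIsChild (v u : V) : Decidable (T.IsChild v u) :=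
  inferInstanceAs (Decidable (T.anc u v ∧ u ≠ v ∧ ∀ w, T.anc u w → T.anc w v → w = u ∨ w = v))

instance instDecPhylo : Decidable T.Phylo :=
  inferInstanceAs (Decidable (∀ u, ¬ T.IsLeaf u → ∃ v w, v ≠ w ∧ T.IsChild v u ∧ T.IsChild w u))

instance instDecBestMatch (σ : V → C) (x y : V) : Decidable (T.BestMatch σ x y) :=
  inferInstanceAs (Decidable (T.IsLeaf x ∧ T.IsLeaf y ∧ σ x ≠ σ y ∧
    ∀ y', T.IsLeaf y' → σ y' = σ y → ∀ u, T.anc u x → T.anc u y' → T.anc u y))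

instance instDecLeaves (x : V) : Decidable (x ∈ T.leaves) :=
  inferInstanceAs (Decidable (T.IsLeaf x))

end Dec

instance decAncSub (v : Fin 7) : ∀ a b, Decidable ((caterpillar.subtree v).anc a b) :=
  fun a b => inferInstanceAs (Decidable (catAnc a.1 b.1))

instance decAncContract (v : Fin 7) (hv : v ≠ caterpillar.root) :
    ∀ a b, Decidable ((caterpillar.contract v hv).anc a b) :=
  fun a b => inferInstanceAs (Decidable (catAnc a.1 b.1))

lemma connectedOn_of_hub {β : Type} (A : β → β → Prop) (S : Set β) (hub : β)
    (hhub : hub ∈ S) (H : ∀ x ∈ S, x = hub ∨ (A x hub ∨ A hub x)) :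
    ConnectedOn A S := by
  refine ⟨⟨hub, hhub⟩, fun x hx y hy => ?_⟩
  have hx' : Relation.ReflTransGen (fun a b => a ∈ S ∧ b ∈ S ∧ (A a b ∨ A b a)) x hub := by
    rcases H x hx with h | h
    · exact h ▸ Relation.ReflTransGen.refl
    · exact Relation.ReflTransGen.single ⟨hx, hhub, h⟩
  have hy' : Relation.ReflTransGen (fun a b => a ∈ S ∧ b ∈ S ∧ (A a b ∨ A b a)) hub y := by
    rcases H y hy with h | h
    · exact h ▸ Relation.ReflTransGen.refl
    · exact Relation.ReflTransGen.single ⟨hhub, hy, h.symm⟩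
  exact hx'.trans hy'

/-- The caterpillar tree `(x'',(x',(x,y)))` with
`σ(x) = σ(x') = σ(x'') ≠ σ(y)` is a (phylogenetic) leaf-colored tree such that
the BMG `G(T(v),σ|.)` of every proper subtree is connected, yet the inner edge
`ρ_T u` with `u = lca_T(x,x')` is redundant w.r.t. `G(T,σ)`; hence the tree is
not least resolved, so the converse of "every proper subtree of an LRT explains
a connected BMG" fails. -/
theorem caterpillar_counterexample :
    caterpillar.Phylo ∧
    (∀ v : Fin 7, v ≠ caterpillar.root →
      RTree.BMGConnected (caterpillar.subtree v) (fun w => catColor w.1)) ∧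
    caterpillar.Redundant catColor 2 ∧
    ¬ caterpillar.LeastResolved catColor := by
  have hred : caterpillar.Redundant catColor 2 := by
    refine ⟨by decide, by decide, by decide, by decide⟩
  refine ⟨by decide, ?_, hred, fun h => h.2 2 hred⟩
  intro v hv
  fin_cases v
  · exact absurd rfl hv
  · exact connectedOn_of_hub _ _ ⟨1, by decide⟩ (by decide) (by decide)
  · exact connectedOn_of_hub _ _ ⟨6, by decide⟩ (by decide) (by decide)
  · exact connectedOn_of_hub _ _ ⟨3, by decide⟩ (by decide) (by decide)
  · exact connectedOn_of_hub _ _ ⟨6, by decide⟩ (by decide) (by decide)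
  · exact connectedOn_of_hub _ _ ⟨5, by decide⟩ (by decide) (by decide)
  · exact connectedOn_of_hub _ _ ⟨6, by decide⟩ (by decide) (by decide)
end
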